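/- Let φ : ℝ → ℝ be continuously differentiable and strictly increasing, let a ∈ ℝ, l > 0, T ∈ ℝ, let s ≥ 1 and k ≥ 1 be integers, and for each p ∈ {1, …, k} let A_p < B_p be reverse-iterate endpoints with φ^[p](A_p) = T and φ^[p](B_p) = T + 2l. For an orthogonal system {f_n}_{n=0}^∞ in L²([a, a+2l]) and indices p₁, …, p_s ∈ {1, …, k}, define the s-th generation functions f_n^{p₁,…,p_s}(t) := f_n(u_{p₁}(u_{p₂}(⋯ u_{p_s}(t) ⋯))) · ∏_{i=1}^{s} w_{p_i}(u_{p_{i+1}}(u_{p_{i+2}}(⋯ u_{p_s}(t) ⋯))) (where the inner composition is empty, i.e. equals t, when i = s). Then for every choice of indices p₁, …, p_s, the family {f_n^{p₁,…,p_s}}_{n=0}^∞ is an orthogonal system in L²([a, a+2l]): ∫_a^{a+2l} f_m^{p₁,…,p_s}(t) f_n^{p₁,…,p_s}(t) dt = 0 for all m ≠ n; moreover each composite map u_{p₁}(u_{p₂}(⋯ u_{p_s}(t) ⋯)) is an automorphism of [a, a+2l]. -/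

import Mathlib

open MeasureTheory Set

/-- The affine map `ρ_p` sending `[a, a+2l]` onto `[A, B]`. -/
noncomputable def rhoMap (A B a l : ℝ) (t : ℝ) : ℝ := (B - A) / (2 * l) * (t - a) + A

/-- The map `u_p(t) = φ^[p](ρ_p(t)) − T + a`. -/
noncomputable def uMap (φ : ℝ → ℝ) (p : ℕ) (A B a l T : ℝ) (t : ℝ) : ℝ :=
  φ^[p] (rhoMap A B a l t) - T + a

/-- The weight `w_p(t) = ∏_{r=0}^{p−1} √(φ′(φ^[r](ρ_p(t))))`. -/
noncomputable def wMap (φ : ℝ → ℝ) (p : ℕ) (A B a l : ℝ) (t : ℝ) : ℝ :=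
  ∏ r ∈ Finset.range p, Real.sqrt (deriv φ (φ^[r] (rhoMap A B a l t)))

/-- The composite map `u_{p₁}(u_{p₂}(⋯ u_{p_s}(t) ⋯))` for the list `[p₁, …, p_s]`. -/
noncomputable def compU (φ : ℝ → ℝ) (a l T : ℝ) (A B : ℕ → ℝ) : List ℕ → ℝ → ℝ
  | [], t => t
  | p :: ps, t => uMap φ p (A p) (B p) a l T (compU φ a l T A B ps t)

/-- The `s`-th generation transform
`f^{p₁,…,p_s}(t) = f(u_{p₁}(⋯ u_{p_s}(t) ⋯)) · ∏_{i=1}^{s} w_{p_i}(u_{p_{i+1}}(⋯ u_{p_s}(t) ⋯))`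
for the list `[p₁, …, p_s]`, defined by the recursion
`gen (p :: ps) f = gen ps (fun x => f (u_p x) * w_p x)`. -/
noncomputable def gen (φ : ℝ → ℝ) (a l T : ℝ) (A B : ℕ → ℝ) : List ℕ → (ℝ → ℝ) → ℝ → ℝ
  | [], f, t => f t
  | p :: ps, f, t =>
      gen φ a l T A B ps
        (fun x => f (uMap φ p (A p) (B p) a l T x) * wMap φ p (A p) (B p) a l x) t

/-! The composite map `C = u_{p₁} ∘ ⋯ ∘ u_{p_s}` fixes `a` and `a + 2l`, is strictly increasing,
and by the chain rule its derivative is `c · W²`, where `c > 0` is the product of the slopes of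
the affine maps `ρ_{p_i}` and `W` is the total weight of the `s`-th generation transform (each
`w_p² = ∏ φ′(φ^[r] ∘ ρ_p)` is the derivative of `φ^[p]` at `ρ_p`; this uses `φ′ ≥ 0`, as
`Real.sqrt` of a negative number is `0`). Since
`f^{p₁,…,p_s} = (f ∘ C) · W`, the substitution `x = C t` gives
`∫ f_m^{p₁,…,p_s} f_n^{p₁,…,p_s} = c⁻¹ ∫ f_m f_n`, so orthogonality is inherited. -/

theorem integral_deriv_smul_comp_of_deriv_nonneg {E : Type*} [NormedAddCommGroup E]
    [NormedSpace ℝ E] {f f' : ℝ → ℝ} {g : ℝ → E} {a b : ℝ} (hab : a ≤ b)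
    (hff' : ∀ x, HasDerivAt f (f' x) x) (hf' : ∀ x, 0 ≤ f' x) :
    ∫ x in a..b, f' x • g (f x) = ∫ u in f a..f b, g u := by
  have hfab : f a ≤ f b := monotone_of_hasDerivAt_nonneg hff' hf' hab
  rw [intervalIntegral.integral_of_le hab, intervalIntegral.integral_of_le hfab,
    ← integral_Icc_eq_integral_Ioc, ← integral_Icc_eq_integral_Ioc]
  exact integral_Icc_deriv_smul_of_deriv_nonneg
    (fun x _ => (hff' x).continuousAt.continuousWithinAt)
    (fun x _ => hff' x) (fun x _ => hf' x) hab

theorem hasDerivAt_iterate {φ : ℝ → ℝ} (hφ : Differentiable ℝ φ) (p : ℕ) (x : ℝ) :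
    HasDerivAt φ^[p] (∏ r ∈ Finset.range p, deriv φ (φ^[r] x)) x := by
  induction p with
  | zero => simpa using hasDerivAt_id x
  | succ p ih =>
    rw [Function.iterate_succ', Finset.prod_range_succ, mul_comm]
    exact (hφ _).hasDerivAt.comp x ih

section SingleIndex

variable {φ : ℝ → ℝ} {p : ℕ} {A B a l T : ℝ}

theorem rhoMap_left : rhoMap A B a l a = A := by
  simp [rhoMap]

theorem rhoMap_right (hl : l ≠ 0) : rhoMap A B a l (a + 2 * l) = B := by
  simp only [rhoMap, add_sub_cancel_left]
  field_simp
  ring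

theorem hasDerivAt_rhoMap (t : ℝ) : HasDerivAt (rhoMap A B a l) ((B - A) / (2 * l)) t := by
  unfold rhoMap
  simpa using (((hasDerivAt_id t).sub_const a).const_mul ((B - A) / (2 * l))).add_const A

theorem strictMono_rhoMap (hAB : A < B) (hl : 0 < l) : StrictMono (rhoMap A B a l) :=
  strictMono_of_hasDerivAt_pos hasDerivAt_rhoMap fun _ => div_pos (by linarith) (by linarith)

theorem uMap_left (hA : φ^[p] A = T) : uMap φ p A B a l T a = a := by
  simp [uMap, rhoMap_left, hA]

theorem uMap_right (hl : l ≠ 0) (hB : φ^[p] B = T + 2 * l) :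
    uMap φ p A B a l T (a + 2 * l) = a + 2 * l := by
  simp only [uMap, rhoMap_right hl, hB]
  ring

theorem strictMono_uMap (hφ : StrictMono φ) (hAB : A < B) (hl : 0 < l) :
    StrictMono (uMap φ p A B a l T) := fun _ _ hxy => by
  have := hφ.iterate p (strictMono_rhoMap (a := a) hAB hl hxy)
  simp only [uMap]
  linarith

theorem wMap_sq (hφ : Monotone φ) (t : ℝ) :
    wMap φ p A B a l t ^ 2 = ∏ r ∈ Finset.range p, deriv φ (φ^[r] (rhoMap A B a l t)) := by
  rw [wMap, ← Finset.prod_pow]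
  exact Finset.prod_congr rfl fun _ _ => Real.sq_sqrt hφ.deriv_nonneg

theorem hasDerivAt_uMap (hd : Differentiable ℝ φ) (hm : Monotone φ) (t : ℝ) :
    HasDerivAt (uMap φ p A B a l T) ((B - A) / (2 * l) * wMap φ p A B a l t ^ 2) t := by
  have hρ : HasDerivAt (rhoMap A B a l) ((B - A) / (2 * l)) t := hasDerivAt_rhoMap t
  have h := (((hasDerivAt_iterate hd p _).comp t hρ).sub_const T).add_const a
  rwa [← wMap_sq hm, mul_comm] at h

end SingleIndex

/-- The total weight `W(t) = ∏_{i=1}^{s} w_{p_i}(u_{p_{i+1}}(⋯ u_{p_s}(t) ⋯))`. -/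
noncomputable def genWeight (φ : ℝ → ℝ) (a l T : ℝ) (A B : ℕ → ℝ) : List ℕ → ℝ → ℝ
  | [], _ => 1
  | p :: ps, t =>
      wMap φ p (A p) (B p) a l (compU φ a l T A B ps t) * genWeight φ a l T A B ps t

noncomputable def slopeProd (A B : ℕ → ℝ) (l : ℝ) (ps : List ℕ) : ℝ :=
  (ps.map fun p => (B p - A p) / (2 * l)).prod

section Composite

variable {φ : ℝ → ℝ} {a l T : ℝ} {A B : ℕ → ℝ}

theorem gen_eq_comp_mul_genWeight (f : ℝ → ℝ) (ps : List ℕ) (t : ℝ) :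
    gen φ a l T A B ps f t = f (compU φ a l T A B ps t) * genWeight φ a l T A B ps t := by
  induction ps generalizing f with
  | nil => simp [gen, compU, genWeight]
  | cons p ps ih =>
    rw [gen, ih, compU, genWeight]
    ring

theorem slopeProd_pos (hl : 0 < l) {ps : List ℕ} (hAB : ∀ p ∈ ps, A p < B p) :
    0 < slopeProd A B l ps :=
  List.prod_pos fun _ hx => by
    obtain ⟨p, hp, rfl⟩ := List.mem_map.1 hx
    exact div_pos (by linarith [hAB p hp]) (by linarith)

theorem compU_left {ps : List ℕ} (hA : ∀ p ∈ ps, φ^[p] (A p) = T) :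
    compU φ a l T A B ps a = a := by
  induction ps with
  | nil => rfl
  | cons p ps ih =>
    rw [compU, ih fun q hq => hA q (List.mem_cons_of_mem p hq),
      uMap_left (hA p List.mem_cons_self)]

theorem compU_right (hl : l ≠ 0) {ps : List ℕ} (hB : ∀ p ∈ ps, φ^[p] (B p) = T + 2 * l) :
    compU φ a l T A B ps (a + 2 * l) = a + 2 * l := by
  induction ps with
  | nil => rfl
  | cons p ps ih =>
    rw [compU, ih fun q hq => hB q (List.mem_cons_of_mem p hq),
      uMap_right hl (hB p List.mem_cons_self)]

theorem strictMono_compU (hφ : StrictMono φ) (hl : 0 < l) {ps : List ℕ}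
    (hAB : ∀ p ∈ ps, A p < B p) : StrictMono (compU φ a l T A B ps) := by
  induction ps with
  | nil => exact strictMono_id
  | cons p ps ih =>
    exact (strictMono_uMap hφ (hAB p List.mem_cons_self) hl).comp
      (ih fun q hq => hAB q (List.mem_cons_of_mem p hq))

theorem hasDerivAt_compU (hd : Differentiable ℝ φ) (hm : Monotone φ) (ps : List ℕ) (t : ℝ) :
    HasDerivAt (compU φ a l T A B ps)
      (slopeProd A B l ps * genWeight φ a l T A B ps t ^ 2) t := by
  induction ps with
  | nil => simpa [compU, slopeProd, genWeight] using hasDerivAt_id' t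
  | cons p ps ih =>
    have hu : HasDerivAt (uMap φ p (A p) (B p) a l T) _ (compU φ a l T A B ps t) :=
      hasDerivAt_uMap hd hm _
    refine (hu.comp t ih).congr_deriv ?_
    simp only [slopeProd, genWeight, List.map_cons, List.prod_cons]
    ring

theorem continuous_compU (hd : Differentiable ℝ φ) (hm : Monotone φ) (ps : List ℕ) :
    Continuous (compU φ a l T A B ps) :=
  continuous_iff_continuousAt.2 fun t => (hasDerivAt_compU hd hm ps t).continuousAt

theorem bijOn_compU (hd : Differentiable ℝ φ) (hφ : StrictMono φ) (hl : 0 < l)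
    {ps : List ℕ}
    (hAB : ∀ p ∈ ps, A p < B p ∧ φ^[p] (A p) = T ∧ φ^[p] (B p) = T + 2 * l) :
    BijOn (compU φ a l T A B ps) (Icc a (a + 2 * l)) (Icc a (a + 2 * l)) := by
  have hC := strictMono_compU (a := a) (T := T) hφ hl fun p hp => (hAB p hp).1
  have hbij := hC.injective.injOn.bijOn_image (s := Icc a (a + 2 * l))
  rwa [(continuous_compU hd hφ.monotone ps).image_Icc_of_strictMono hC,
    compU_left fun p hp => (hAB p hp).2.1, compU_right hl.ne' fun p hp => (hAB p hp).2.2] at hbij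

theorem integral_gen_mul_gen (hd : Differentiable ℝ φ) (hm : Monotone φ) (hl : 0 < l)
    {ps : List ℕ}
    (hAB : ∀ p ∈ ps, A p < B p ∧ φ^[p] (A p) = T ∧ φ^[p] (B p) = T + 2 * l) (f g : ℝ → ℝ) :
    ∫ t in a..(a + 2 * l), gen φ a l T A B ps f t * gen φ a l T A B ps g t
      = (slopeProd A B l ps)⁻¹ * ∫ x in a..(a + 2 * l), f x * g x := by
  set C := compU φ a l T A B ps
  set W := genWeight φ a l T A B ps
  set c := slopeProd A B l ps
  have hc : 0 < c := slopeProd_pos hl fun p hp => (hAB p hp).1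
  have hC' : ∀ t, HasDerivAt C (c * W t ^ 2) t := hasDerivAt_compU hd hm ps
  have hCa : C a = a := compU_left fun p hp => (hAB p hp).2.1
  have hCb : C (a + 2 * l) = a + 2 * l := compU_right hl.ne' fun p hp => (hAB p hp).2.2
  calc ∫ t in a..(a + 2 * l), gen φ a l T A B ps f t * gen φ a l T A B ps g t
      = ∫ t in a..(a + 2 * l), c⁻¹ * ((c * W t ^ 2) • (f (C t) * g (C t))) := by
        refine intervalIntegral.integral_congr fun t _ => ?_
        rw [gen_eq_comp_mul_genWeight, gen_eq_comp_mul_genWeight, smul_eq_mul]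
        field_simp
        ring
    _ = c⁻¹ * ∫ x in a..(a + 2 * l), f x * g x := by
        rw [intervalIntegral.integral_const_mul,
          integral_deriv_smul_comp_of_deriv_nonneg (g := fun x => f x * g x)
          (by linarith) hC' fun t => by positivity, hCa, hCb]

end Composite

theorem sth_generation_orthogonal_general
    (φ : ℝ → ℝ) (hφ : ContDiff ℝ 1 φ) (hmono : StrictMono φ)
    (a l T : ℝ) (hl : 0 < l) (k : ℕ)
    (A B : ℕ → ℝ)
    (hAB : ∀ p, 1 ≤ p → p ≤ k →
      A p < B p ∧ φ^[p] (A p) = T ∧ φ^[p] (B p) = T + 2 * l)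
    (f : ℕ → ℝ → ℝ)
    (horth : ∀ m n, m ≠ n → ∫ t in a..(a + 2 * l), f m t * f n t = 0)
    (ps : List ℕ) (hps : ∀ p ∈ ps, 1 ≤ p ∧ p ≤ k) :
    (∀ m n, m ≠ n →
      ∫ t in a..(a + 2 * l),
        gen φ a l T A B ps (f m) t * gen φ a l T A B ps (f n) t = 0) ∧
    Set.BijOn (compU φ a l T A B ps) (Set.Icc a (a + 2 * l)) (Set.Icc a (a + 2 * l)) := by
  have hd : Differentiable ℝ φ := hφ.differentiable one_ne_zero
  have hend : ∀ p ∈ ps, A p < B p ∧ φ^[p] (A p) = T ∧ φ^[p] (B p) = T + 2 * l :=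
    fun p hp => hAB p (hps p hp).1 (hps p hp).2
  refine ⟨fun m n hmn => ?_, bijOn_compU hd hmono hl hend⟩
  rw [integral_gen_mul_gen hd hmono.monotone hl hend, horth m n hmn, mul_zero]

/-- For every choice of indices `p₁, …, p_s ∈ {1, …, k}`, the `s`-th
generation functions form an orthogonal system in `L²([a, a+2l])`, and the composite map
`u_{p₁} ∘ ⋯ ∘ u_{p_s}` is an automorphism of `[a, a+2l]`. -/
theorem sth_generation_orthogonal
    (φ : ℝ → ℝ) (hφ : ContDiff ℝ 1 φ) (hmono : StrictMono φ)
    (a l T : ℝ) (hl : 0 < l) (s k : ℕ) (hs : 1 ≤ s) (hk : 1 ≤ k)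
    (A B : ℕ → ℝ)
    (hAB : ∀ p, 1 ≤ p → p ≤ k →
      A p < B p ∧ φ^[p] (A p) = T ∧ φ^[p] (B p) = T + 2 * l)
    (f : ℕ → ℝ → ℝ)
    (hf : ∀ n, MemLp (f n) 2 (volume.restrict (Set.Ioc a (a + 2 * l))))
    (horth : ∀ m n, m ≠ n → ∫ t in a..(a + 2 * l), f m t * f n t = 0)
    (ps : List ℕ) (hlen : ps.length = s) (hps : ∀ p ∈ ps, 1 ≤ p ∧ p ≤ k) :
    (∀ m n, m ≠ n →
      ∫ t in a..(a + 2 * l),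
        gen φ a l T A B ps (f m) t * gen φ a l T A B ps (f n) t = 0) ∧
    Set.BijOn (compU φ a l T A B ps) (Set.Icc a (a + 2 * l)) (Set.Icc a (a + 2 * l)) :=
  sth_generation_orthogonal_general φ hφ hmono a l T hl k A B hAB f horth ps hps
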